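/- Let $w$ be a weight, $N>1$, $l\geq 1$, $\varepsilon_1\in(0,1)$ with $\varepsilon_1 N^l = 1/2$, $\delta>0$, and let $g, F\geq 0$ be measurable functions on a set $\Omega$ with $w(\Omega)<\infty$. Suppose that for all $k\geq 1$: $w(\{x\in\Omega: g(x)>N^k\}) \leq \varepsilon_1^k\, w(\{x\in\Omega: g(x)>1\}) + \sum_{i=1}^k \varepsilon_1^i\, w(\{x\in\Omega: F(x)>\delta N^{k-i}\})$. Then there is a constant $C$ depending only on $N$, $l$, and $\delta$ such that $\int_\Omega g^l\,dw \leq C\big(w(\Omega) + \int_\Omega F^l\,dw\big)$. -/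

import Mathlib

/-!
Cut `g ^ l` along the shells `N ^ k < g ≤ N ^ (k + 1)`: this gives
`∫ g ^ l ≤ N ^ l (w Ω + ∑ₖ N ^ (l k) w {g > N ^ k})`. Multiplying the hypothesis by `N ^ (l k)`
turns `ε₁ ^ i` into `(ε₁ N ^ l) ^ i = 2 ^ (-i)` in front of `N ^ (l (k - i)) w {F > δ N ^ (k - i)}`,
so by a Cauchy product the series is at most `w {g > 1} + ∑ⱼ N ^ (l j) w {F > δ N ^ j}`.
Pointwise, `∑ {N ^ (l j) | δ N ^ j < F x}` is a geometric sum dominated by its last term, hence by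
`N ^ l / ((N ^ l - 1) δ ^ l) * F x ^ l`.
-/

open MeasureTheory Finset
open scoped ENNReal

theorem ENNReal.tsum_mul_tsum_eq_tsum_sum_range (f g : ℕ → ℝ≥0∞) :
    (∑' n, f n) * ∑' n, g n = ∑' n, ∑ k ∈ range (n + 1), f k * g (n - k) := by
  simp_rw [← Nat.sum_antidiagonal_eq_sum_range_succ fun k l => f k * g l,
    ← ENNReal.tsum_mul_right, ← ENNReal.tsum_mul_left]
  rw [← ENNReal.tsum_prod, ← HasAntidiagonal.sigmaAntidiagonalEquivProd.tsum_eq,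
    ENNReal.tsum_sigma']
  refine tsum_congr fun n => ?_
  rw [← Finset.tsum_subtype]
  rfl

lemma Finset.sum_Icc_one_eq_sum_range_succ {M : Type*} [AddCommMonoid M] (n : ℕ) (f : ℕ → M) :
    ∑ i ∈ Icc 1 (n + 1), f i = ∑ k ∈ range (n + 1), f (k + 1) := by
  rw [range_eq_Ico, sum_Ico_add' f]
  rfl

theorem ENNReal.tsum_pow_mul_le_of_recursive_bound (R e A : ℝ≥0∞) (a b : ℕ → ℝ≥0∞)
    (h : ∀ k, 1 ≤ k → a k ≤ e ^ k * A + ∑ i ∈ Icc 1 k, e ^ i * b (k - i)) :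
    ∑' k, R ^ (k + 1) * a (k + 1) ≤
      (∑' d, (R * e) ^ (d + 1)) * (A + ∑' j, R ^ j * b j) := by
  have hterm : ∀ k, R ^ (k + 1) * a (k + 1) ≤ (R * e) ^ (k + 1) * A +
      ∑ i ∈ range (k + 1), (R * e) ^ (i + 1) * (R ^ (k - i) * b (k - i)) := by
    intro k
    refine (mul_le_mul_right (h (k + 1) le_add_self) _).trans_eq ?_
    rw [mul_add, ← mul_assoc, ← mul_pow, sum_Icc_one_eq_sum_range_succ, mul_sum]
    congr 1
    refine sum_congr rfl fun i hi => ?_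
    rw [Nat.add_sub_add_right,
      ← pow_mul_pow_sub R (Nat.add_le_add_right (mem_range_succ_iff.mp hi) 1),
      Nat.add_sub_add_right, mul_pow]
    ring
  calc ∑' k, R ^ (k + 1) * a (k + 1)
      ≤ ∑' k, ((R * e) ^ (k + 1) * A +
          ∑ i ∈ range (k + 1), (R * e) ^ (i + 1) * (R ^ (k - i) * b (k - i))) :=
        ENNReal.tsum_le_tsum hterm
    _ = _ := by
        rw [ENNReal.tsum_add, ENNReal.tsum_mul_right, mul_add,
          ENNReal.tsum_mul_tsum_eq_tsum_sum_range (fun i => (R * e) ^ (i + 1))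
            (fun j => R ^ j * b j)]

lemma ENNReal.tsum_inv_two_pow_succ : ∑' d : ℕ, (2⁻¹ : ℝ≥0∞) ^ (d + 1) = 1 := by
  rw [ENNReal.tsum_geometric_add_one, ENNReal.one_sub_inv_two, inv_inv,
    ENNReal.inv_mul_cancel two_ne_zero ENNReal.ofNat_ne_top]

lemma exists_pow_lt_le_pow_succ {N t : ℝ} (hN : 1 < N) (ht : 1 < t) :
    ∃ m : ℕ, N ^ m < t ∧ t ≤ N ^ (m + 1) := by
  classical
  have hex : ∃ n : ℕ, t ≤ N ^ n := (pow_unbounded_of_one_lt t hN).imp fun _ => le_of_lt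
  have hpos : Nat.find hex ≠ 0 := fun h0 => by
    have := Nat.find_spec hex
    rw [h0, pow_zero] at this
    linarith
  obtain ⟨m, hm⟩ := Nat.exists_eq_succ_of_ne_zero hpos
  exact ⟨m, lt_of_not_ge (Nat.find_min hex (by omega)), by simpa [hm] using Nat.find_spec hex⟩

lemma ENNReal.ofReal_rpow_le_mul_one_add_tsum_indicator {N l t : ℝ} (hN : 1 < N) (hl : 0 ≤ l)
    (ht : 0 ≤ t) :
    ENNReal.ofReal (t ^ l) ≤ ENNReal.ofReal (N ^ l) *
      (1 + ∑' k : ℕ, (Set.Ioi (N ^ (k + 1))).indicator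
        (fun _ => ENNReal.ofReal (N ^ l) ^ (k + 1)) t) := by
  by_cases htN : t ≤ N
  · calc ENNReal.ofReal (t ^ l) ≤ ENNReal.ofReal (N ^ l) :=
          ENNReal.ofReal_le_ofReal (Real.rpow_le_rpow ht htN hl)
      _ ≤ _ := le_mul_of_one_le_right' le_self_add
  obtain ⟨m, hm, htm⟩ := exists_pow_lt_le_pow_succ hN (by linarith)
  obtain ⟨k, rfl⟩ : ∃ k, m = k + 1 :=
    Nat.exists_eq_succ_of_ne_zero fun h0 => htN (by simpa [h0] using htm)
  calc ENNReal.ofReal (t ^ l) ≤ ENNReal.ofReal ((N ^ (k + 2)) ^ l) :=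
        ENNReal.ofReal_le_ofReal (Real.rpow_le_rpow ht htm hl)
    _ = ENNReal.ofReal (N ^ l) * ENNReal.ofReal (N ^ l) ^ (k + 1) := by
        rw [← Real.rpow_pow_comm (by linarith), ENNReal.ofReal_pow (by positivity), pow_succ']
    _ ≤ _ := by
        gcongr
        refine le_trans ?_ le_add_self
        rw [← Set.indicator_of_mem (Set.mem_Ioi.mpr hm) fun _ => ENNReal.ofReal (N ^ l) ^ (k + 1)]
        exact ENNReal.le_tsum (f := fun k : ℕ => (Set.Ioi (N ^ (k + 1))).indicator
          (fun _ => ENNReal.ofReal (N ^ l) ^ (k + 1)) t) k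

lemma geom_sum_rpow_le {N l s : ℝ} (hN : 1 < N) (hl : 0 < l) {m : ℕ} (hm : N ^ m < s) :
    ∑ j ∈ range (m + 1), (N ^ l) ^ j ≤ N ^ l / (N ^ l - 1) * s ^ l := by
  have hr : 1 < N ^ l := Real.one_lt_rpow hN hl
  have hrm : (N ^ l) ^ m ≤ s ^ l := by
    rw [Real.rpow_pow_comm (by linarith)]
    exact Real.rpow_le_rpow (by positivity) hm.le hl.le
  calc ∑ j ∈ range (m + 1), (N ^ l) ^ j = ((N ^ l) ^ (m + 1) - 1) / (N ^ l - 1) :=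
        geom_sum_eq hr.ne' _
    _ ≤ N ^ l / (N ^ l - 1) * (N ^ l) ^ m := by
        rw [div_mul_eq_mul_div, ← pow_succ']
        gcongr
        linarith
    _ ≤ N ^ l / (N ^ l - 1) * s ^ l := by
        gcongr

lemma ENNReal.tsum_indicator_Ioi_le_ofReal_mul_ofReal_rpow {N l δ t : ℝ} (hN : 1 < N) (hl : 0 < l)
    (hδ : 0 < δ) (ht : 0 ≤ t) :
    ∑' j : ℕ, (Set.Ioi (δ * N ^ j)).indicator (fun _ => ENNReal.ofReal (N ^ l) ^ j) t ≤
      ENNReal.ofReal (N ^ l / ((N ^ l - 1) * δ ^ l)) * ENNReal.ofReal (t ^ l) := by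
  have hmono : Monotone fun j : ℕ => δ * N ^ j := fun i j hij =>
    mul_le_mul_of_nonneg_left (pow_le_pow_right₀ hN.le hij) hδ.le
  by_cases htδ : t ≤ δ
  · refine le_of_eq_of_le (ENNReal.tsum_eq_zero.mpr fun j => ?_) zero_le
    refine Set.indicator_of_notMem (fun hj => ?_) _
    have := hmono (Nat.zero_le j)
    simp only [pow_zero, mul_one] at this
    linarith [Set.mem_Ioi.mp hj]
  obtain ⟨m, hm, htm⟩ := exists_pow_lt_le_pow_succ hN ((one_lt_div hδ).mpr (not_le.mp htδ))
  have hsupp : ∀ j ∉ range (m + 1),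
      (Set.Ioi (δ * N ^ j)).indicator (fun _ => ENNReal.ofReal (N ^ l) ^ j) t = 0 := by
    intro j hj
    refine Set.indicator_of_notMem (fun hj' => ?_) _
    have := hmono (not_lt.mp (mt mem_range.mpr hj))
    have := (div_le_iff₀' hδ).mp htm
    exact absurd (Set.mem_Ioi.mp hj') (by linarith)
  have hmem : ∀ j ∈ range (m + 1), (Set.Ioi (δ * N ^ j)).indicator
      (fun _ => ENNReal.ofReal (N ^ l) ^ j) t = ENNReal.ofReal ((N ^ l) ^ j) := by
    intro j hj
    rw [Set.indicator_of_mem, ENNReal.ofReal_pow (by positivity)]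
    have := hmono (mem_range_succ_iff.mp hj)
    exact Set.mem_Ioi.mpr (by linarith [(lt_div_iff₀' hδ).mp hm])
  have hr : 1 < N ^ l := Real.one_lt_rpow hN hl
  rw [tsum_eq_sum hsupp, sum_congr rfl hmem,
    ← ENNReal.ofReal_sum_of_nonneg fun j _ => by positivity,
    ← ENNReal.ofReal_mul (div_nonneg (by linarith) (mul_nonneg (by linarith) (by positivity)))]
  refine ENNReal.ofReal_le_ofReal ((geom_sum_rpow_le hN hl hm).trans_eq ?_)
  rw [Real.div_rpow ht hδ.le]
  field_simp

section Measure

variable {α : Type*} [MeasurableSpace α] (ν : Measure α) {N l : ℝ}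

lemma measurable_indicator_Ioi_comp {f : α → ℝ} (hf : Measurable f) (a : ℝ) (c : ℝ≥0∞) :
    Measurable fun x => (Set.Ioi a).indicator (fun _ => c) (f x) :=
  (measurable_const.indicator measurableSet_Ioi).comp hf

lemma lintegral_indicator_Ioi_comp {f : α → ℝ} (hf : Measurable f) (a : ℝ) (c : ℝ≥0∞) :
    ∫⁻ x, (Set.Ioi a).indicator (fun _ => c) (f x) ∂ν = c * ν {x | a < f x} :=
  lintegral_indicator_const_comp hf measurableSet_Ioi c

theorem lintegral_ofReal_rpow_le_mul_add_tsum_measure {g : α → ℝ} (hg : Measurable g)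
    (hg0 : ∀ x, 0 ≤ g x) (hN : 1 < N) (hl : 0 ≤ l) :
    ∫⁻ x, ENNReal.ofReal (g x ^ l) ∂ν ≤ ENNReal.ofReal (N ^ l) *
      (ν Set.univ + ∑' k : ℕ, ENNReal.ofReal (N ^ l) ^ (k + 1) * ν {x | N ^ (k + 1) < g x}) := by
  calc ∫⁻ x, ENNReal.ofReal (g x ^ l) ∂ν
      ≤ ∫⁻ x, ENNReal.ofReal (N ^ l) * (1 + ∑' k : ℕ, (Set.Ioi (N ^ (k + 1))).indicator
          (fun _ => ENNReal.ofReal (N ^ l) ^ (k + 1)) (g x)) ∂ν :=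
        lintegral_mono fun x => ENNReal.ofReal_rpow_le_mul_one_add_tsum_indicator hN hl (hg0 x)
    _ = _ := by
        rw [lintegral_const_mul' _ _ ENNReal.ofReal_ne_top, lintegral_add_left measurable_const,
          lintegral_one,
          lintegral_tsum fun k => (measurable_indicator_Ioi_comp hg _ _).aemeasurable]
        simp only [lintegral_indicator_Ioi_comp ν hg]

theorem tsum_pow_mul_measure_le_lintegral_ofReal_rpow {F : α → ℝ} (hF : Measurable F)
    (hF0 : ∀ x, 0 ≤ F x) (hN : 1 < N) (hl : 0 < l) {δ : ℝ} (hδ : 0 < δ) :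
    ∑' j : ℕ, ENNReal.ofReal (N ^ l) ^ j * ν {x | δ * N ^ j < F x} ≤
      ENNReal.ofReal (N ^ l / ((N ^ l - 1) * δ ^ l)) * ∫⁻ x, ENNReal.ofReal (F x ^ l) ∂ν := by
  calc ∑' j : ℕ, ENNReal.ofReal (N ^ l) ^ j * ν {x | δ * N ^ j < F x}
      = ∫⁻ x, ∑' j : ℕ, (Set.Ioi (δ * N ^ j)).indicator
          (fun _ => ENNReal.ofReal (N ^ l) ^ j) (F x) ∂ν := by
        rw [lintegral_tsum fun j => (measurable_indicator_Ioi_comp hF _ _).aemeasurable]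
        simp only [lintegral_indicator_Ioi_comp ν hF]
    _ ≤ ∫⁻ x, ENNReal.ofReal (N ^ l / ((N ^ l - 1) * δ ^ l)) * ENNReal.ofReal (F x ^ l) ∂ν :=
        lintegral_mono fun x =>
          ENNReal.tsum_indicator_Ioi_le_ofReal_mul_ofReal_rpow hN hl hδ (hF0 x)
    _ = _ := lintegral_const_mul' _ _ ENNReal.ofReal_ne_top

theorem lintegral_ofReal_rpow_le_of_recursive_bound {g F : α → ℝ} (hg : Measurable g)
    (hg0 : ∀ x, 0 ≤ g x) (hF : Measurable F) (hF0 : ∀ x, 0 ≤ F x) (hN : 1 < N) (hl : 0 < l)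
    {δ : ℝ} (hδ : 0 < δ) {e : ℝ≥0∞} (he : ENNReal.ofReal (N ^ l) * e = 2⁻¹)
    (hrec : ∀ k, 1 ≤ k → ν {x | N ^ k < g x} ≤ e ^ k * ν {x | 1 < g x} +
      ∑ i ∈ Icc 1 k, e ^ i * ν {x | δ * N ^ (k - i) < F x}) :
    ∫⁻ x, ENNReal.ofReal (g x ^ l) ∂ν ≤ ENNReal.ofReal (N ^ l) * (2 * ν Set.univ +
      ENNReal.ofReal (N ^ l / ((N ^ l - 1) * δ ^ l)) * ∫⁻ x, ENNReal.ofReal (F x ^ l) ∂ν) := by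
  have hiter := ENNReal.tsum_pow_mul_le_of_recursive_bound (ENNReal.ofReal (N ^ l)) _ _
    (fun k => ν {x | N ^ k < g x}) (fun j => ν {x | δ * N ^ j < F x}) hrec
  rw [he, ENNReal.tsum_inv_two_pow_succ, one_mul] at hiter
  calc ∫⁻ x, ENNReal.ofReal (g x ^ l) ∂ν
      ≤ ENNReal.ofReal (N ^ l) * (ν Set.univ + ∑' k : ℕ,
          ENNReal.ofReal (N ^ l) ^ (k + 1) * ν {x | N ^ (k + 1) < g x}) :=
        lintegral_ofReal_rpow_le_mul_add_tsum_measure ν hg hg0 hN hl.le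
    _ ≤ ENNReal.ofReal (N ^ l) * (ν Set.univ + (ν Set.univ +
          ENNReal.ofReal (N ^ l / ((N ^ l - 1) * δ ^ l)) * ∫⁻ x, ENNReal.ofReal (F x ^ l) ∂ν)) := by
        gcongr
        exact hiter.trans (add_le_add (measure_mono (Set.subset_univ _))
          (tsum_pow_mul_measure_le_lintegral_ofReal_rpow ν hF hF0 hN hl hδ))
    _ = _ := by ring

end Measure

theorem stmt_14_general (N l δ ε₁ : ℝ) (hN : 1 < N) (hl : 1 ≤ l) (hδ : 0 < δ)
    (hε₁ : 0 < ε₁) (hε₁N : ε₁ * N ^ l = 1 / 2) :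
    ∃ C : ℝ, 0 < C ∧
      ∀ (α : Type) (_ : MeasurableSpace α) (μ : Measure α)
        (Ω : Set α) (_ : MeasurableSet Ω) (_ : μ Ω < ⊤)
        (g F : α → ℝ) (_ : Measurable g) (_ : ∀ x, 0 ≤ g x)
        (_ : Measurable F) (_ : ∀ x, 0 ≤ F x),
        (∀ k : ℕ, 1 ≤ k →
          μ {x ∈ Ω | N ^ (k : ℝ) < g x} ≤
            ENNReal.ofReal (ε₁ ^ k) * μ {x ∈ Ω | 1 < g x} +
              ∑ i ∈ Finset.Icc 1 k, ENNReal.ofReal (ε₁ ^ i) *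
                μ {x ∈ Ω | δ * N ^ ((k - i : ℕ) : ℝ) < F x}) →
        (∫⁻ x in Ω, ENNReal.ofReal (g x ^ l) ∂μ) ≤
          ENNReal.ofReal C * (μ Ω + ∫⁻ x in Ω, ENNReal.ofReal (F x ^ l) ∂μ) := by
  have hl0 : 0 < l := zero_lt_one.trans_le hl
  have hr : 1 < N ^ l := Real.one_lt_rpow hN hl0
  set K := N ^ l / ((N ^ l - 1) * δ ^ l)
  have hK : 0 ≤ K := div_nonneg (by linarith) (mul_nonneg (by linarith) (by positivity))
  refine ⟨N ^ l * (2 + K), by positivity, ?_⟩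
  intro α _ μ Ω hΩ _ g F hg hg0 hF hF0 hyp
  set ν := μ.restrict Ω
  have hsep : ∀ P : α → Prop, μ {x ∈ Ω | P x} = ν {x | P x} := fun P => by
    rw [Measure.restrict_apply' hΩ, Set.inter_comm]
    rfl
  have hrec : ∀ k, 1 ≤ k → ν {x | N ^ k < g x} ≤ ENNReal.ofReal ε₁ ^ k * ν {x | 1 < g x} +
      ∑ i ∈ Finset.Icc 1 k, ENNReal.ofReal ε₁ ^ i * ν {x | δ * N ^ (k - i) < F x} := by
    intro k hk
    simpa only [hsep, Real.rpow_natCast, ENNReal.ofReal_pow hε₁.le] using hyp k hk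
  have hhalf : ENNReal.ofReal (N ^ l) * ENNReal.ofReal ε₁ = 2⁻¹ := by
    rw [← ENNReal.ofReal_mul (by positivity), mul_comm, hε₁N, one_div,
      ENNReal.ofReal_inv_of_pos two_pos, ENNReal.ofReal_ofNat]
  have hν : ν Set.univ = μ Ω := Measure.restrict_apply_univ Ω
  set J := ∫⁻ x, ENNReal.ofReal (F x ^ l) ∂ν
  calc ∫⁻ x, ENNReal.ofReal (g x ^ l) ∂ν
      ≤ ENNReal.ofReal (N ^ l) * (2 * μ Ω + ENNReal.ofReal K * J) := by
        rw [← hν]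
        exact lintegral_ofReal_rpow_le_of_recursive_bound ν hg hg0 hF hF0 hN hl0 hδ hhalf hrec
    _ ≤ ENNReal.ofReal (N ^ l) * ((2 + ENNReal.ofReal K) * μ Ω + (2 + ENNReal.ofReal K) * J) := by
        gcongr
        · exact le_self_add
        · exact le_add_self
    _ = ENNReal.ofReal (N ^ l * (2 + K)) * (μ Ω + J) := by
        rw [ENNReal.ofReal_mul (by positivity), ENNReal.ofReal_add zero_le_two hK,
          ENNReal.ofReal_ofNat]
        ring

/-- Iteration lemma: if the superlevel sets of `g` satisfy the geometric decay
`μ({g > N^k}) ≤ ε₁^k μ({g > 1}) + ∑_{i=1}^k ε₁^i μ({F > δ N^{k-i}})` with `ε₁ N^l = 1/2`,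
then `∫_Ω g^l dμ ≤ C (μ(Ω) + ∫_Ω F^l dμ)` for a constant `C = C(N, l, δ)`. -/
theorem stmt_14 (N l δ ε₁ : ℝ) (hN : 1 < N) (hl : 1 ≤ l) (hδ : 0 < δ)
    (hε₁ : 0 < ε₁) (hε₁' : ε₁ < 1) (hε₁N : ε₁ * N ^ l = 1 / 2) :
    ∃ C : ℝ, 0 < C ∧
      ∀ (α : Type) (_ : MeasurableSpace α) (μ : Measure α)
        (Ω : Set α) (_ : MeasurableSet Ω) (_ : μ Ω < ⊤)
        (g F : α → ℝ) (_ : Measurable g) (_ : ∀ x, 0 ≤ g x)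
        (_ : Measurable F) (_ : ∀ x, 0 ≤ F x),
        (∀ k : ℕ, 1 ≤ k →
          μ {x ∈ Ω | N ^ (k : ℝ) < g x} ≤
            ENNReal.ofReal (ε₁ ^ k) * μ {x ∈ Ω | 1 < g x} +
              ∑ i ∈ Finset.Icc 1 k, ENNReal.ofReal (ε₁ ^ i) *
                μ {x ∈ Ω | δ * N ^ ((k - i : ℕ) : ℝ) < F x}) →
        (∫⁻ x in Ω, ENNReal.ofReal (g x ^ l) ∂μ) ≤
          ENNReal.ofReal C * (μ Ω + ∫⁻ x in Ω, ENNReal.ofReal (F x ^ l) ∂μ) :=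
  stmt_14_general N l δ ε₁ hN hl hδ hε₁ hε₁N
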